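/- arXiv:math/0610138 — 2 statements merged into one kernel-verified Lean document; each statement's English description precedes it below -/
import Mathlib

section
/- Let a, b be nonnegative integers with g = a + b, and suppose g + 2 < 3·|a - b|. Let ζ be a primitive complex cube root of unity and τ = a·ζ + b·ζ⁻¹. Then |1 - conj(τ)| > (g+2)/√3. -/
/-!
Solving `ζ ^ 2 + ζ + 1 = 0` gives `ζ = -1/2 ± i√3/2` and `ζ⁻¹ = -1 - ζ`, so
`1 - conj τ = (1 + b) - (a - b) conj ζ` has real part `(a + b + 2)/2` and imaginary part of
absolute value `√3 |a - b| / 2`. Hence `4 ‖1 - conj τ‖² = (g + 2)² + 3 (a - b)²`, which exceeds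
`(g + 2)² + (g + 2)² / 3 = 4 (g + 2)² / 3` exactly when `g + 2 < 3 |a - b|`.
-/

open ComplexConjugate

namespace Complex

variable {ζ : ℂ}

theorem re_eq_and_im_sq_eq_of_sq_add_self_add_one_eq_zero (h : ζ ^ 2 + ζ + 1 = 0) :
    ζ.re = -1 / 2 ∧ ζ.im ^ 2 = 3 / 4 := by
  have hre : ζ.re ^ 2 - ζ.im ^ 2 + ζ.re + 1 = 0 := by
    simpa [sq] using congrArg re h
  have him : ζ.im * (2 * ζ.re + 1) = 0 := by
    have := congrArg im h
    simp only [sq, add_im, mul_im, one_im, zero_im] at this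
    linear_combination this
  rcases mul_eq_zero.mp him with him0 | hre0
  · rw [him0] at hre
    nlinarith [sq_nonneg (ζ.re + 1 / 2)]
  · have hre' : ζ.re = -1 / 2 := by linarith
    exact ⟨hre', by rw [hre'] at hre; linarith⟩

theorem inv_eq_neg_one_sub_of_sq_add_self_add_one_eq_zero (h : ζ ^ 2 + ζ + 1 = 0) :
    ζ⁻¹ = -1 - ζ := by
  refine inv_eq_of_mul_eq_one_right ?_
  linear_combination -h

theorem normSq_one_sub_conj_of_sq_add_self_add_one_eq_zero (h : ζ ^ 2 + ζ + 1 = 0) (x y : ℝ) :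
    normSq (1 - conj (x * ζ + y * ζ⁻¹)) = ((x + y + 2) ^ 2 + 3 * (x - y) ^ 2) / 4 := by
  obtain ⟨hre, him⟩ := re_eq_and_im_sq_eq_of_sq_add_self_add_one_eq_zero h
  have hτ : (x : ℂ) * ζ + y * ζ⁻¹ = ((x - y : ℝ) : ℂ) * ζ - y := by
    rw [inv_eq_neg_one_sub_of_sq_add_self_add_one_eq_zero h]
    push_cast
    ring
  rw [hτ, normSq_apply]
  simp only [map_sub, map_mul, conj_ofReal, sub_re, sub_im, one_re, one_im, mul_re, mul_im,
    ofReal_re, ofReal_im, conj_re, conj_im, hre]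
  linear_combination (x - y) ^ 2 * him

end Complex

theorem abs_one_sub_conj_tau_gt (a b g : ℕ) (hg : g = a + b)
    (hlt : (g : ℤ) + 2 < 3 * |(a : ℤ) - (b : ℤ)|) (ζ : ℂ)
    (hζ : ζ ^ 2 + ζ + 1 = 0) (τ : ℂ) (hτ : τ = (a : ℂ) * ζ + (b : ℂ) * ζ⁻¹) :
    ‖1 - (starRingEnd ℂ) τ‖ > ((g : ℝ) + 2) / Real.sqrt 3 := by
  subst hg hτ
  have hlt' : (a + b + 2 : ℝ) < 3 * |(a - b : ℝ)| := by exact_mod_cast hlt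
  have hsq : (a + b + 2 : ℝ) ^ 2 < 9 * (a - b : ℝ) ^ 2 :=
    calc (a + b + 2 : ℝ) ^ 2 < (3 * |(a - b : ℝ)|) ^ 2 :=
          pow_lt_pow_left₀ hlt' (by positivity) two_ne_zero
      _ = 9 * (a - b : ℝ) ^ 2 := by rw [mul_pow, sq_abs]; norm_num
  have hnorm := Complex.normSq_one_sub_conj_of_sq_add_self_add_one_eq_zero hζ a b
  push_cast at hnorm ⊢
  rw [gt_iff_lt, div_lt_iff₀ (by positivity), Complex.norm_def, hnorm,
    ← Real.sqrt_mul (by positivity), Real.lt_sqrt (by positivity)]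
  linarith
end

section
/- Suppose g ≥ 0, a + b = g with a, b nonnegative integers, ζ a primitive complex cube root of unity, τ = a·ζ + b·ζ⁻¹, B a finite set of cardinality g + 2, c : B → ℂ with each c_P a primitive cube root of unity, and 1 - conj(τ) = ∑_{P∈B} 1/(1 - c_P). Then g + 2 ≥ 3|a - b|. -/
theorem lefschetz_core {α : Type*} (a b g : ℕ) (hg : a + b = g) (ζ : ℂ)
    (hζ : ζ ^ 2 + ζ + 1 = 0) (τ : ℂ) (hτ : τ = (a : ℂ) * ζ + (b : ℂ) * ζ⁻¹)
    (B : Finset α) (hB : B.card = g + 2) (c : α → ℂ)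
    (hc : ∀ P ∈ B, c P ^ 3 = 1 ∧ c P ≠ 1)
    (heq : 1 - (starRingEnd ℂ) τ = ∑ P ∈ B, 1 / (1 - c P)) :
    (g : ℤ) + 2 ≥ 3 * |(a : ℤ) - (b : ℤ)| := by
  have hζ1 : ζ ≠ 1 := by rintro rfl; norm_num at hζ
  have hζ3 : ζ ^ 3 = 1 := by linear_combination (ζ - 1) * hζ
  have hζim : ζ.im ≠ 0 := by
    intro h
    have hre : ζ = (ζ.re : ℂ) := Complex.ext rfl (by simp [h])
    rw [hre] at hζ
    have h2 : (ζ.re ^ 2 + ζ.re + 1 : ℝ) = 0 := by exact_mod_cast hζ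
    nlinarith [sq_nonneg (ζ.re + 1/2)]
  have hconj : (starRingEnd ℂ) ζ = ζ ^ 2 := by
    have h1 : ((starRingEnd ℂ) ζ) ^ 2 + (starRingEnd ℂ) ζ + 1 = 0 := by
      have := congrArg (starRingEnd ℂ) hζ
      simpa using this
    have h2 : ((starRingEnd ℂ) ζ - ζ) * ((starRingEnd ℂ) ζ - ζ ^ 2) = 0 := by
      linear_combination h1 + (ζ - 1 - (starRingEnd ℂ) ζ) * hζ
    rcases mul_eq_zero.mp h2 with h | h
    · exact absurd (Complex.conj_eq_iff_im.mp (sub_eq_zero.mp h)) hζim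
    · exact sub_eq_zero.mp h
  have hinv2 : (ζ ^ 2)⁻¹ = ζ := inv_eq_of_mul_eq_one_right (by linear_combination hζ3)
  have hinv : ζ⁻¹ = ζ ^ 2 := inv_eq_of_mul_eq_one_right (by linear_combination hζ3)
  have hconjτ : (starRingEnd ℂ) τ = (a : ℂ) * ζ ^ 2 + (b : ℂ) * ζ := by
    rw [hτ]
    simp [map_add, map_mul, map_inv₀, hconj, hinv2]
  -- (1-ζ)(1-ζ²) = 3
  have h3 : (1 - ζ) * (1 - ζ ^ 2) = 3 := by linear_combination (ζ - 2) * hζ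
  have hne1 : (1 : ℂ) - ζ ≠ 0 := by
    intro h; rw [h, zero_mul] at h3; norm_num at h3
  have hne2 : (1 : ℂ) - ζ ^ 2 ≠ 0 := by
    intro h; rw [h, mul_zero] at h3; norm_num at h3
  -- split the sum
  classical
  set S := B.filter (fun P => c P = ζ) with hSdef
  set T := B.filter (fun P => ¬ c P = ζ) with hTdef
  have hdich : ∀ P ∈ B, c P = ζ ∨ c P = ζ ^ 2 := by
    intro P hP
    obtain ⟨h31, hne⟩ := hc P hP
    have h1 : c P ^ 2 + c P + 1 = 0 := by
      have hfac : (c P - 1) * (c P ^ 2 + c P + 1) = 0 := by linear_combination h31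
      rcases mul_eq_zero.mp hfac with h | h
      · exact absurd (sub_eq_zero.mp h) hne
      · exact h
    have h2 : (c P - ζ) * (c P - ζ ^ 2) = 0 := by
      linear_combination h1 + (ζ - 1 - c P) * hζ
    rcases mul_eq_zero.mp h2 with h | h
    · exact Or.inl (sub_eq_zero.mp h)
    · exact Or.inr (sub_eq_zero.mp h)
  have hsplit : ∑ P ∈ B, 1 / (1 - c P)
      = (S.card : ℂ) * (1 - ζ)⁻¹ + (T.card : ℂ) * (1 - ζ ^ 2)⁻¹ := by
    rw [← Finset.sum_filter_add_sum_filter_not B (fun P => c P = ζ)]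
    congr 1
    · rw [Finset.sum_congr rfl (fun P hP => by
        rw [(Finset.mem_filter.mp hP).2, one_div])]
      simp [hSdef, mul_comm]
    · rw [Finset.sum_congr rfl (fun P hP => by
        have hP' := Finset.mem_filter.mp hP
        rcases hdich P hP'.1 with h | h
        · exact absurd h hP'.2
        · rw [h, one_div])]
      simp [hTdef, mul_comm]
  have hi1 : (1 - ζ)⁻¹ = (1 - ζ ^ 2) / 3 :=
    inv_eq_of_mul_eq_one_right (by linear_combination h3 / 3)
  have hi2 : (1 - ζ ^ 2)⁻¹ = (1 - ζ) / 3 :=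
    inv_eq_of_mul_eq_one_right (by linear_combination h3 / 3)
  rw [hsplit, hconjτ, hi1, hi2] at heq
  -- clear denominators
  have heq3 : (1 - ((a : ℂ) * ζ ^ 2 + (b : ℂ) * ζ)) * 3
      = (S.card : ℂ) * (1 - ζ ^ 2) + (T.card : ℂ) * (1 - ζ) := by
    linear_combination 3 * heq
  -- extract the relation between coefficients of 1 and ζ
  set m := S.card with hm
  set n := T.card with hn
  have hpq : ((3 + 3 * (a : ℂ) - 2 * m - n)) + ((3 * (a : ℂ) - 3 * b - m + n)) * ζ = 0 := by
    linear_combination heq3 + (3 * (a : ℂ) - (m : ℂ)) * hζ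
  have him := congrArg Complex.im hpq
  simp [Complex.add_im, Complex.mul_im] at him
  have hq : (3 * (a : ℝ) - 3 * b - m + n) = 0 := by
    rcases him with h | h
    · exact h
    · exact absurd h hζim
  have hkey : 3 * a + n = m + 3 * b := by
    have hR : 3 * (a : ℝ) + n = m + 3 * b := by linarith
    exact_mod_cast hR
  have hmn : m + n = g + 2 := by
    rw [hm, hn, hSdef, hTdef, Finset.card_filter_add_card_filter_not, hB]
  rcases abs_cases ((a : ℤ) - (b : ℤ)) with ⟨h1, _⟩ | ⟨h1, _⟩ <;> omega
end
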